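/- Every graph G of order n ≥ 2 satisfies st_D(G) ≤ n − ω(G) + 1, where ω(G) is the clique number of G. -/

import Mathlib

/-!
Let `s` be a clique of `G` with at least two vertices. Deleting everything outside `s` leaves
`K_{|s|}`, and deleting in addition one vertex of `s` leaves `K_{|s|-1}`; complete graphs have
distinguishing number equal to their order, so one of these two deletions, of at most
`n - |s| + 1` vertices, changes `D(G)`. Apply this to a maximum clique. If `ω(G) ≤ 1`, then `G`
is edgeless with `D(G) = n ≥ 2`, and deleting all but one vertex already changes `D(G)`.
-/

open SimpleGraph

/-- The distinguishing number of a graph: the least `d` such that there is a vertex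
labeling with `d` labels preserved only by the trivial automorphism. -/
noncomputable def distNum {V : Type*} (G : SimpleGraph V) : ℕ :=
  sInf {d : ℕ | ∃ f : V → Fin d, ∀ φ : G ≃g G, (∀ x, f (φ x) = f x) → ∀ x, φ x = x}

/-- The distinguishing stability of a graph: the minimum cardinality of a proper subset
`S` of the vertex set whose removal changes the distinguishing number. -/
noncomputable def stD {V : Type*} (G : SimpleGraph V) : ℕ :=
  sInf {k : ℕ | ∃ S : Set V, S ≠ Set.univ ∧ S.ncard = k ∧
    distNum (G.induce Sᶜ) ≠ distNum G}

/-- The distinguishing bondage number of a graph: the minimum cardinality of a set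
of edges whose removal changes the distinguishing number. -/
noncomputable def bD {V : Type*} (G : SimpleGraph V) : ℕ :=
  sInf {k : ℕ | ∃ F : Set (Sym2 V), F ⊆ G.edgeSet ∧ F.ncard = k ∧
    distNum (G.deleteEdges F) ≠ distNum G}

def IsDistinguishing {W α : Type*} (H : SimpleGraph W) (f : W → α) : Prop :=
  ∀ φ : H ≃g H, (∀ x, f (φ x) = f x) → ∀ x, φ x = x

section DistNum

variable {W : Type*} [Fintype W] (H : SimpleGraph W)

theorem isDistinguishing_equivFin : IsDistinguishing H (Fintype.equivFin W) :=
  fun _ hφ x => (Fintype.equivFin W).injective (hφ x)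

theorem distNum_le_card : distNum H ≤ Fintype.card W :=
  Nat.sInf_le (⟨_, isDistinguishing_equivFin H⟩ : ∃ f : W → Fin _, IsDistinguishing H f)

theorem exists_isDistinguishing_fin_distNum :
    ∃ f : W → Fin (distNum H), IsDistinguishing H f :=
  Nat.sInf_mem (s := {d | ∃ f : W → Fin d, IsDistinguishing H f})
    ⟨_, _, isDistinguishing_equivFin H⟩

/-- A labeling with fewer labels than vertices gives two vertices `u ≠ v` the same label, and
then the transposition of `u` and `v` preserves it. -/
theorem distNum_eq_card_of_forall_swap [DecidableEq W]
    (hswap : ∀ u v : W, ∃ φ : H ≃g H, ⇑φ = Equiv.swap u v) : distNum H = Fintype.card W := by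
  refine le_antisymm (distNum_le_card H) (not_lt.mp fun hlt => ?_)
  obtain ⟨f, hf⟩ := exists_isDistinguishing_fin_distNum H
  obtain ⟨u, v, huv, hfuv⟩ :=
    Fintype.exists_ne_map_eq_of_card_lt f (by rwa [Fintype.card_fin])
  obtain ⟨φ, hφ⟩ := hswap u v
  have hfixed : ∀ x, f (φ x) = f x := by
    intro x
    rw [hφ, Equiv.swap_apply_def]
    split_ifs <;> simp_all
  exact huv (by simpa [hφ] using (hf φ hfixed u).symm)

theorem distNum_top : distNum (⊤ : SimpleGraph W) = Fintype.card W := by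
  classical exact distNum_eq_card_of_forall_swap _ fun u v =>
    ⟨⟨Equiv.swap u v, by simp [(Equiv.swap u v).injective.ne_iff]⟩, rfl⟩

theorem distNum_bot : distNum (⊥ : SimpleGraph W) = Fintype.card W := by
  classical exact distNum_eq_card_of_forall_swap _ fun u v => ⟨⟨Equiv.swap u v, by simp⟩, rfl⟩

end DistNum

section Clique

variable {V : Type*} {G : SimpleGraph V}

theorem distNum_induce_of_isClique {s : Finset V} (hs : G.IsClique (s : Set V)) :
    distNum (G.induce (s : Set V)) = s.card := by
  rw [induce_eq_top.mpr hs, distNum_top]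
  exact Fintype.card_coe s

theorem eq_bot_of_cliqueNum_lt_two [Finite V] (hω : G.cliqueNum < 2) : G = ⊥ :=
  cliqueFree_two.mp fun t ht => by
    have := ht.isClique.card_le_cliqueNum
    rw [ht.card_eq] at this
    omega

variable [Fintype V]

theorem stD_le_card_sub_card_of_distNum_induce_ne (s : Finset V) (hs : s.Nonempty)
    (hD : distNum (G.induce (s : Set V)) ≠ distNum G) :
    stD G ≤ Fintype.card V - s.card := by
  refine Nat.sInf_le ⟨(s : Set V)ᶜ, Set.compl_ne_univ.mpr hs, ?_, ?_⟩
  · rw [Set.ncard_compl, Set.ncard_coe_finset, Nat.card_eq_fintype_card]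
  · rwa [compl_compl]

theorem stD_le_card_sub_card_add_one_of_isClique {s : Finset V} (hs : G.IsClique (s : Set V))
    (hcard : 2 ≤ s.card) : stD G ≤ Fintype.card V - s.card + 1 := by
  classical
  have hsV : s.card ≤ Fintype.card V := Finset.card_le_univ s
  by_cases hD : distNum G = s.card
  · obtain ⟨v, hv⟩ : s.Nonempty := Finset.card_pos.mp (by omega)
    have herase : (s.erase v).card = s.card - 1 := Finset.card_erase_of_mem hv
    have hsub := stD_le_card_sub_card_of_distNum_induce_ne (s.erase v)
      (Finset.card_pos.mp (by omega)) (by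
        rw [distNum_induce_of_isClique (hs.subset (Finset.coe_subset.mpr (s.erase_subset v))),
          herase, hD]
        omega)
    omega
  · have hsub := stD_le_card_sub_card_of_distNum_induce_ne s (Finset.card_pos.mp (by omega))
      (by rw [distNum_induce_of_isClique hs]; exact Ne.symm hD)
    omega

theorem stD_bot_le_card_sub_one (hV : 2 ≤ Fintype.card V) :
    stD (⊥ : SimpleGraph V) ≤ Fintype.card V - 1 := by
  obtain ⟨v⟩ : Nonempty V := Fintype.card_pos_iff.mp (by omega)
  simpa only [Finset.card_singleton] using
    stD_le_card_sub_card_of_distNum_induce_ne {v} (Finset.singleton_nonempty v) (by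
      rw [distNum_induce_of_isClique (by simp), distNum_bot, Finset.card_singleton]
      omega)

end Clique

/-- $st_D(G) \le n - \omega(G) + 1$. -/
theorem stD_le_card_sub_cliqueNum {V : Type*} [Fintype V] (G : SimpleGraph V)
    (h : 2 ≤ Fintype.card V) :
    stD G ≤ Fintype.card V - G.cliqueNum + 1 := by
  rcases le_or_gt 2 G.cliqueNum with hω | hω
  · obtain ⟨s, hs⟩ := G.exists_isNClique_cliqueNum
    simpa only [hs.card_eq] using
      stD_le_card_sub_card_add_one_of_isClique hs.isClique (hs.card_eq ▸ hω)
  · obtain rfl := eq_bot_of_cliqueNum_lt_two hω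
    have := stD_bot_le_card_sub_one h
    omega
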